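/- arXiv:2212.13822 — 6 statements merged into one kernel-verified Lean document; each statement's English description precedes it below -/
import Mathlib

section
/- Let G be an r-rank connected graph and let X, Y be r-splits of G with |X ∩ Y| ≥ r. Then X ∪ Y is an r-split of G. -/
/-- The cut-rank of a cut `(X, Xᶜ)` in a graph `G`: the rank over `GF(2)` of the
adjacency submatrix with rows indexed by `X` and columns by `Xᶜ`. -/
noncomputable def cutRank {V : Type*} [Fintype V] [DecidableEq V] (G : SimpleGraph V)
    [DecidableRel G.Adj] (X : Finset V) : ℕ :=
  (Matrix.of (fun (i : X) (j : (Xᶜ : Finset V)) =>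
    if G.Adj (i : V) (j : V) then (1 : ZMod 2) else 0)).rank

/-- `G` is `r`-rank connected if every `k`-split with `k < r` is trivial. -/
def RankConnected {V : Type*} [Fintype V] [DecidableEq V] (G : SimpleGraph V)
    [DecidableRel G.Adj] (r : ℕ) : Prop :=
  ∀ (X : Finset V) (k : ℕ), k < r → cutRank G X ≤ k →
    cutRank G X = min X.card Xᶜ.card

namespace SplitUnionAux

open Finset

variable {V : Type*} [Fintype V] [DecidableEq V] (G : SimpleGraph V) [DecidableRel G.Adj]

/-- adjacency entries over GF(2) -/
def a (v w : V) : ZMod 2 := if G.Adj v w then 1 else 0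

/-- rank of the submatrix with rows `I`, columns `J`. -/
noncomputable def rk (I J : Finset V) : ℕ :=
  (Matrix.of (fun (i : I) (j : J) => a G (i : V) (j : V))).rank

lemma cutRank_eq (X : Finset V) : cutRank G X = rk G X Xᶜ := rfl

/-- left-kernel style subspace: vectors supported in `I` orthogonal to columns in `J`. -/
def K (I J : Finset V) : Submodule (ZMod 2) (V → ZMod 2) where
  carrier := {x | (∀ v ∉ I, x v = 0) ∧ ∀ j ∈ J, ∑ v, x v * a G v j = 0}
  add_mem' := by
    rintro x y ⟨hx1, hx2⟩ ⟨hy1, hy2⟩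
    refine ⟨fun v hv => by simp [hx1 v hv, hy1 v hv], fun j hj => ?_⟩
    simp only [Pi.add_apply, add_mul, Finset.sum_add_distrib, hx2 j hj, hy2 j hj, add_zero]
  zero_mem' := by simp
  smul_mem' := by
    rintro c x ⟨hx1, hx2⟩
    refine ⟨fun v hv => by simp [hx1 v hv], fun j hj => ?_⟩
    simp only [Pi.smul_apply, smul_eq_mul, mul_assoc, ← Finset.mul_sum, hx2 j hj, mul_zero]

lemma mem_K {I J : Finset V} {x : V → ZMod 2} :
    x ∈ K G I J ↔ (∀ v ∉ I, x v = 0) ∧ ∀ j ∈ J, ∑ v, x v * a G v j = 0 := Iff.rfl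

lemma K_mono {I I' J J' : Finset V} (hI : I ⊆ I') (hJ : J' ⊆ J) :
    K G I J ≤ K G I' J' := by
  rintro x ⟨h1, h2⟩
  exact ⟨fun v hv => h1 v (fun h => hv (hI h)), fun j hj => h2 j (hJ hj)⟩

lemma K_inf (I₁ J₁ I₂ J₂ : Finset V) :
    K G I₁ J₁ ⊓ K G I₂ J₂ = K G (I₁ ∩ I₂) (J₁ ∪ J₂) := by
  ext x
  simp only [Submodule.mem_inf, mem_K, Finset.mem_inter, Finset.mem_union]
  constructor
  · rintro ⟨⟨h1, h2⟩, ⟨h3, h4⟩⟩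
    refine ⟨fun v hv => ?_, fun j hj => ?_⟩
    · rcases not_and_or.mp hv with h | h
      · exact h1 v h
      · exact h3 v h
    · rcases hj with h | h
      · exact h2 j h
      · exact h4 j h
  · rintro ⟨h1, h2⟩
    exact ⟨⟨fun v hv => h1 v (fun h => hv h.1), fun j hj => h2 j (Or.inl hj)⟩,
      ⟨fun v hv => h1 v (fun h => hv h.2), fun j hj => h2 j (Or.inr hj)⟩⟩

/-- The transposed submatrix, as a linear map `(I → GF(2)) → (J → GF(2))`. -/
noncomputable def T (I J : Finset V) : (↥I → ZMod 2) →ₗ[ZMod 2] (↥J → ZMod 2) :=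
  Matrix.mulVecLin (Matrix.of (fun (j : J) (i : I) => a G (i : V) (j : V)))

lemma sum_ext (I : Finset V) (x : ↥I → ZMod 2) (g : V → ZMod 2) :
    (∑ v, (if h : v ∈ I then x ⟨v, h⟩ else 0) * g v) = ∑ i : ↥I, x i * g (i : V) := by
  have h1 : ∑ i : ↥I, x i * g (i : V) =
      ∑ v ∈ I, (if h : v ∈ I then x ⟨v, h⟩ else 0) * g v := by
    rw [← Finset.sum_attach I (fun v => (if h : v ∈ I then x ⟨v, h⟩ else 0) * g v)]
    apply Finset.sum_congr rfl
    intro i _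
    simp
  rw [h1]
  exact (Finset.sum_subset (Finset.subset_univ I) (fun v _ hv => by simp [hv])).symm

/-- `K I J` is linearly equivalent to the kernel of `T I J`. -/
noncomputable def kerEquiv (I J : Finset V) :
    LinearMap.ker (T G I J) ≃ₗ[ZMod 2] K G I J where
  toFun x := ⟨fun v => if h : v ∈ I then (x : I → ZMod 2) ⟨v, h⟩ else 0, by
    refine ⟨fun v hv => by simp [hv], fun j hj => ?_⟩
    have hx := x.2
    rw [LinearMap.mem_ker] at hx
    have := congrFun hx ⟨j, hj⟩
    simp only [T, Matrix.mulVecLin_apply, Matrix.mulVec, dotProduct, Matrix.of_apply,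
      Pi.zero_apply] at this
    show (∑ v, (if h : v ∈ I then (x : ↥I → ZMod 2) ⟨v, h⟩ else 0) * a G v j) = 0
    rw [sum_ext I (x : ↥I → ZMod 2) (fun v => a G v j)]
    rw [← this]
    apply Finset.sum_congr rfl
    intro i _
    ring⟩
  invFun y := ⟨fun i => (y : V → ZMod 2) i, by
    rw [LinearMap.mem_ker]
    ext j
    have hy := y.2
    rw [mem_K] at hy
    have := hy.2 j j.2
    simp only [T, Matrix.mulVecLin_apply, Matrix.mulVec, dotProduct, Matrix.of_apply,
      Pi.zero_apply]
    rw [← this]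
    rw [show (∑ v : V, (y : V → ZMod 2) v * a G v (j : V)) =
        ∑ v ∈ I, (y : V → ZMod 2) v * a G v (j : V) from
      (Finset.sum_subset (Finset.subset_univ I)
        (fun v _ hv => by simp [hy.1 v hv])).symm]
    rw [← Finset.sum_attach I (fun v => (y : V → ZMod 2) v * a G v (j : V))]
    exact Finset.sum_congr rfl (fun i _ => by ring)⟩
  map_add' x y := by
    ext v
    by_cases h : v ∈ I <;> simp [h]
  map_smul' c x := by
    ext v
    by_cases h : v ∈ I <;> simp [h]
  left_inv x := by
    ext i
    simp [i.2]
  right_inv y := by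
    ext v
    by_cases h : v ∈ I
    · simp [h]
    · have hy := y.2
      rw [mem_K] at hy
      simp [h, hy.1 v h]

lemma rk_add_finrank_K (I J : Finset V) :
    rk G I J + Module.finrank (ZMod 2) (K G I J) = I.card := by
  have h1 : rk G I J = (Matrix.of (fun (j : J) (i : I) => a G (i : V) (j : V))).rank := by
    rw [rk, ← Matrix.rank_transpose]
    rfl
  have h2 := LinearMap.finrank_range_add_finrank_ker (T G I J)
  have h3 : Module.finrank (ZMod 2) (LinearMap.ker (T G I J)) =
      Module.finrank (ZMod 2) (K G I J) := (kerEquiv G I J).finrank_eq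
  have h4 : Module.finrank (ZMod 2) (↥I → ZMod 2) = I.card := by
    simp [Module.finrank_pi, Fintype.card_coe]
  rw [h1]
  have h5 : (Matrix.of (fun (j : J) (i : I) => a G (i : V) (j : V))).rank =
      Module.finrank (ZMod 2) (LinearMap.range (T G I J)) := rfl
  rw [h5, ← h3]
  omega

lemma rk_submodular (I₁ J₁ I₂ J₂ : Finset V) :
    rk G (I₁ ∪ I₂) (J₁ ∩ J₂) + rk G (I₁ ∩ I₂) (J₁ ∪ J₂) ≤ rk G I₁ J₁ + rk G I₂ J₂ := by
  have e1 := rk_add_finrank_K G I₁ J₁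
  have e2 := rk_add_finrank_K G I₂ J₂
  have e3 := rk_add_finrank_K G (I₁ ∪ I₂) (J₁ ∩ J₂)
  have e4 := rk_add_finrank_K G (I₁ ∩ I₂) (J₁ ∪ J₂)
  have hcard := Finset.card_union_add_card_inter I₁ I₂
  have hsup : K G I₁ J₁ ⊔ K G I₂ J₂ ≤ K G (I₁ ∪ I₂) (J₁ ∩ J₂) :=
    sup_le (K_mono G Finset.subset_union_left Finset.inter_subset_left)
      (K_mono G Finset.subset_union_right Finset.inter_subset_right)
  have hdim := Submodule.finrank_sup_add_finrank_inf_eq (K G I₁ J₁) (K G I₂ J₂)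
  have hmono : Module.finrank (ZMod 2) ↥(K G I₁ J₁ ⊔ K G I₂ J₂) ≤
      Module.finrank (ZMod 2) ↥(K G (I₁ ∪ I₂) (J₁ ∩ J₂)) :=
    Submodule.finrank_mono hsup
  rw [K_inf] at hdim
  omega

lemma cutRank_submodular (X Y : Finset V) :
    cutRank G (X ∪ Y) + cutRank G (X ∩ Y) ≤ cutRank G X + cutRank G Y := by
  have := rk_submodular G X Xᶜ Y Yᶜ
  rw [cutRank_eq, cutRank_eq, cutRank_eq, cutRank_eq, Finset.compl_union, Finset.compl_inter]
  exact this

lemma cutRank_le_compl_card (Z : Finset V) : cutRank G Z ≤ Zᶜ.card := by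
  calc cutRank G Z ≤ Fintype.card (Zᶜ : Finset V) := Matrix.rank_le_card_width _
    _ = Zᶜ.card := Fintype.card_coe _

end SplitUnionAux

theorem split_union {V : Type*} [Fintype V] [DecidableEq V] (G : SimpleGraph V)
    [DecidableRel G.Adj] (r : ℕ) (hG : RankConnected G r) (X Y : Finset V)
    (hX : cutRank G X ≤ r) (hY : cutRank G Y ≤ r) (hXY : r ≤ (X ∩ Y).card) :
    cutRank G (X ∪ Y) ≤ r := by
  by_cases h : r ≤ cutRank G (X ∩ Y)
  · have := SplitUnionAux.cutRank_submodular G X Y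
    omega
  · push_neg at h
    have htriv := hG (X ∩ Y) (cutRank G (X ∩ Y)) h le_rfl
    have hle : cutRank G (X ∩ Y) = (X ∩ Y)ᶜ.card := by
      rcases min_cases (X ∩ Y).card (X ∩ Y)ᶜ.card with ⟨heq, _⟩ | ⟨heq, _⟩
      · omega
      · omega
    have h1 : cutRank G (X ∪ Y) ≤ (X ∪ Y)ᶜ.card := SplitUnionAux.cutRank_le_compl_card G _
    have h2 : (X ∪ Y)ᶜ.card ≤ (X ∩ Y)ᶜ.card :=
      Finset.card_le_card (Finset.compl_subset_compl.mpr
        (Finset.inter_subset_union))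
    omega
end

section
/- Let H ∈ K_r(n) and let A, B be hyperedges of H with |A| ≤ n/2 and |B| ≤ n/2. Then A ∩ B is a hyperedge of H. -/
/-- A hypergraph on vertex set `Fin n`, identified with its family of hyperedges. -/
abbrev Family (n : ℕ) := Set (Finset (Fin n))

/-- Membership in the class `K_r(n)`: rules (k0), (k1), (k2). -/
def MemK (r n : ℕ) (E : Family n) : Prop :=
  (∀ X : Finset (Fin n), X.card ≤ r → X ∈ E) ∧
  (∀ A ∈ E, Aᶜ ∈ E) ∧
  (∀ A ∈ E, ∀ B ∈ E, r ≤ (A ∩ B).card → A ∪ B ∈ E)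

/-- Membership in the class `K⊥_r(n)`: only rules (k0) and (k1). -/
def MemKbot (r n : ℕ) (E : Family n) : Prop :=
  (∀ X : Finset (Fin n), X.card ≤ r → X ∈ E) ∧
  (∀ A ∈ E, Aᶜ ∈ E)

/-- Closure of `H` in `K_r(n)`: intersection of all members of `K_r(n)` containing `H`. -/
def clr (r n : ℕ) (H : Family n) : Family n :=
  ⋂₀ {E | MemK r n E ∧ H ⊆ E}

/-- Closure of `H` in `K⊥_r(n)`. -/
def clbot (r n : ℕ) (H : Family n) : Family n :=
  ⋂₀ {E | MemKbot r n E ∧ H ⊆ E}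

/-- `A` and `B` are `r`-orthogonal. -/
def Ortho (r n : ℕ) (A B : Finset (Fin n)) : Prop :=
  clr r n {A, B} = clbot r n {A, B}

/-- A family is `r`-cross-free if all pairs of members are `r`-orthogonal. -/
def CrossFree (r n : ℕ) (H : Family n) : Prop :=
  ∀ A ∈ H, ∀ B ∈ H, Ortho r n A B

theorem inter_mem_of_small (r n : ℕ) (H : Family n) (hH : MemK r n H)
    (A B : Finset (Fin n)) (hA : A ∈ H) (hB : B ∈ H)
    (hAc : A.card ≤ n / 2) (hBc : B.card ≤ n / 2) :
    A ∩ B ∈ H := by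
  obtain ⟨h0, h1, h2⟩ := hH
  rcases le_or_gt (A ∩ B).card r with h | h
  · exact h0 _ h
  · have hc : Aᶜ ∪ Bᶜ ∈ H := by
      apply h2 _ (h1 A hA) _ (h1 B hB)
      have h3 : (Aᶜ ∩ Bᶜ) = (A ∪ B)ᶜ := (Finset.compl_union A B).symm
      rw [h3, Finset.card_compl, Fintype.card_fin]
      have h4 : (A ∪ B).card + (A ∩ B).card = A.card + B.card :=
        Finset.card_union_add_card_inter A B
      omega
    have := h1 _ hc
    rwa [Finset.compl_union, compl_compl, compl_compl] at this
end

section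
/- Let H ∈ K_r(n), X ⊆ [n], and let 𝒜 be the set of all hyperedges A of H with X ⊆ A and |A| ≤ n/2. If 𝒜 is nonempty, then the intersection of all members of 𝒜 is itself a member of 𝒜. -/
lemma inter_mem (r n : ℕ) (H : Set (Finset (Fin n))) (hH : MemK r n H)
    {A B : Finset (Fin n)} (hA : A ∈ H) (hB : B ∈ H)
    (hcA : A.card ≤ n / 2) (hcB : B.card ≤ n / 2) : A ∩ B ∈ H := by
  obtain ⟨h0, h1, h2⟩ := hH
  by_cases h : (A ∩ B).card ≤ r
  · exact h0 _ h
  · push_neg at h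
    have hAc := h1 A hA
    have hBc := h1 B hB
    have hkey : r ≤ (Aᶜ ∩ Bᶜ).card := by
      have : Aᶜ ∩ Bᶜ = (A ∪ B)ᶜ := (Finset.compl_union A B).symm
      rw [this, Finset.card_compl, Fintype.card_fin]
      have hcup : (A ∪ B).card + (A ∩ B).card = A.card + B.card :=
        Finset.card_union_add_card_inter A B
      have hn : 2 * (n / 2) ≤ n := Nat.mul_div_le n 2
      have hAB : (A ∪ B).card + r ≤ n := by omega
      omega
    have := h2 _ hAc _ hBc hkey
    have h3 := h1 _ this
    rwa [Finset.compl_union, compl_compl, compl_compl] at h3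

theorem smallest_hyperedge_containing (r n : ℕ) (H : Family n) (hH : MemK r n H)
    (X : Finset (Fin n))
    (hne : ∃ A ∈ H, X ⊆ A ∧ A.card ≤ n / 2) :
    ∃ A₀, (A₀ ∈ H ∧ X ⊆ A₀ ∧ A₀.card ≤ n / 2) ∧
      ∀ v : Fin n, v ∈ A₀ ↔ (∀ A ∈ H, X ⊆ A → A.card ≤ n / 2 → v ∈ A) := by
  classical
  set S : Finset (Finset (Fin n)) :=
    Finset.univ.filter (fun A => A ∈ H ∧ X ⊆ A ∧ A.card ≤ n / 2) with hS
  have hmemS : ∀ A, A ∈ S ↔ (A ∈ H ∧ X ⊆ A ∧ A.card ≤ n / 2) := by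
    intro A; simp [hS]
  obtain ⟨A, hA⟩ := hne
  have hSne : S.Nonempty := ⟨A, (hmemS A).2 hA⟩
  set A₀ := S.inf' hSne id with hA₀
  have hp : A₀ ∈ H ∧ X ⊆ A₀ ∧ A₀.card ≤ n / 2 := by
    refine Finset.inf'_induction hSne id
      (p := fun B => B ∈ H ∧ X ⊆ B ∧ B.card ≤ n / 2) ?_ ?_
    · rintro a ⟨ha1, ha2, ha3⟩ b ⟨hb1, hb2, hb3⟩
      refine ⟨inter_mem r n H hH ha1 hb1 ha3 hb3,
        Finset.subset_inter ha2 hb2, ?_⟩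
      exact le_trans (Finset.card_le_card Finset.inter_subset_left) ha3
    · intro b hb; exact (hmemS b).1 hb
  refine ⟨A₀, hp, fun v => ⟨fun hv A hAH hXA hcA => ?_, fun hv => ?_⟩⟩
  · exact Finset.inf'_le id ((hmemS A).2 ⟨hAH, hXA, hcA⟩) hv
  · exact hv A₀ hp.1 hp.2.1 hp.2.2
end

section
/- Let H ∈ K_r(n) and let A be a hyperedge of H with r+1 ≤ |A| ≤ n/2. Then there exist sets X_1,…,X_k ⊆ A, each of size r+1, such that A is a hyperedge of cl_r({φ_H(X_1),…,φ_H(X_k)}), where φ_H(X_i) is the smallest hyperedge of H containing X_i and of size at most n/2. -/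
/-!
Fix `S ⊆ A` with `|S| = r`. For each `a ∈ A \ S` the set `X_a = S ∪ {a}` lies in `A`, so its
minimal hyperedge `φ(X_a)` lies in `A` too; hence `A` is the union of the `φ(X_a)`. All of them
contain `S`, so rule (k2) glues them together one at a time inside any member of `K_r(n)`
containing them, and `A` belongs to the closure.

Minimal hyperedges exist because hyperedges of size at most `n / 2` meeting in at least `r`
points have their intersection in `H`: it is the complement of the union of their complements,
which meet in at least `r` points.
-/

namespace MemK

variable {r n : ℕ} {E : Family n}

theorem inter_mem_of_le_card_compl_union (hE : MemK r n E) {C D : Finset (Fin n)}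
    (hC : C ∈ E) (hD : D ∈ E) (h : r ≤ (C ∪ D)ᶜ.card) : C ∩ D ∈ E := by
  have hcompl : Cᶜ ∪ Dᶜ ∈ E :=
    hE.2.2 _ (hE.2.1 C hC) _ (hE.2.1 D hD) (by rwa [← Finset.compl_union])
  simpa only [Finset.compl_union, compl_compl] using hE.2.1 _ hcompl

theorem inter_mem (hE : MemK r n E) {C D : Finset (Fin n)} (hC : C ∈ E) (hD : D ∈ E)
    (hCn : C.card ≤ n / 2) (hDn : D.card ≤ n / 2) (h : r ≤ (C ∩ D).card) : C ∩ D ∈ E := by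
  refine hE.inter_mem_of_le_card_compl_union hC hD ?_
  have := Finset.card_union_add_card_inter C D
  rw [Finset.card_compl, Fintype.card_fin]
  omega

theorem sup_mem (hE : MemK r n E) {ι : Type*} {s : Finset ι} (hs : s.Nonempty)
    {B : ι → Finset (Fin n)} {S : Finset (Fin n)} (hS : r ≤ S.card)
    (hSB : ∀ i ∈ s, S ⊆ B i) (hB : ∀ i ∈ s, B i ∈ E) : s.sup B ∈ E := by
  induction hs using Finset.Nonempty.cons_induction with
  | singleton i => simpa using hB i (Finset.mem_singleton_self i)
  | cons i s hi hs ih =>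
    simp only [Finset.mem_cons, forall_eq_or_imp] at hSB hB
    obtain ⟨j, hj⟩ := hs
    have hS_sup : S ⊆ s.sup B := (hSB.2 j hj).trans (Finset.le_sup hj)
    rw [Finset.sup_cons]
    exact hE.2.2 _ hB.1 _ (ih hSB.2 hB.2)
      (hS.trans (Finset.card_le_card (Finset.subset_inter hSB.1 hS_sup)))

theorem exists_least_hyperedge (hE : MemK r n E) {A X : Finset (Fin n)} (hA : A ∈ E)
    (hAn : A.card ≤ n / 2) (hXA : X ⊆ A) (hX : r ≤ X.card) :
    ∃ B ∈ E, X ⊆ B ∧ B.card ≤ n / 2 ∧ ∀ C ∈ E, X ⊆ C → C.card ≤ n / 2 → B ⊆ C := by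
  classical
  let candidates := Finset.univ.filter fun C : Finset (Fin n) => C ∈ E ∧ X ⊆ C ∧ C.card ≤ n / 2
  obtain ⟨B, hB, hBmin⟩ :=
    candidates.exists_min_image Finset.card ⟨A, by simp [candidates, hA, hXA, hAn]⟩
  simp only [candidates, Finset.mem_filter, Finset.mem_univ, true_and] at hB hBmin
  obtain ⟨hBE, hXB, hBn⟩ := hB
  refine ⟨B, hBE, hXB, hBn, fun C hC hXC hCn => ?_⟩
  have hXBC : X ⊆ B ∩ C := Finset.subset_inter hXB hXC
  have hBC : B ∩ C ∈ E :=
    hE.inter_mem hBE hC hBn hCn (hX.trans (Finset.card_le_card hXBC))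
  have hle := hBmin _ ⟨hBC, hXBC, (Finset.card_le_card Finset.inter_subset_left).trans hBn⟩
  exact Finset.inter_eq_left.mp (Finset.eq_of_subset_of_card_le Finset.inter_subset_left hle)

end MemK

theorem sup_mem_clr {r n : ℕ} {ι : Type*} [Fintype ι] [Nonempty ι] {B : ι → Finset (Fin n)}
    {S : Finset (Fin n)} (hS : r ≤ S.card) (hSB : ∀ i, S ⊆ B i) :
    Finset.univ.sup B ∈ clr r n (Set.range B) := by
  rintro E ⟨hE, hBE⟩
  exact hE.sup_mem Finset.univ_nonempty hS (fun i _ => hSB i) fun i _ => hBE ⟨i, rfl⟩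

theorem hyperedge_from_essential (r n : ℕ) (H : Family n) (hH : MemK r n H)
    (A : Finset (Fin n)) (hA : A ∈ H) (h₁ : r + 1 ≤ A.card) (h₂ : A.card ≤ n / 2) :
    ∃ (k : ℕ) (X B : Fin k → Finset (Fin n)),
      (∀ i, X i ⊆ A ∧ (X i).card = r + 1) ∧
      (∀ i, B i ∈ H ∧ X i ⊆ B i ∧ (B i).card ≤ n / 2 ∧
        ∀ C ∈ H, X i ⊆ C → C.card ≤ n / 2 → B i ⊆ C) ∧
      A ∈ clr r n (Set.range B) := by
  obtain ⟨S, hSA, hS⟩ := A.exists_subset_card_eq (show r ≤ A.card by omega)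
  obtain ⟨a₀, ha₀⟩ : (A \ S).Nonempty := by
    rw [← Finset.card_pos, Finset.card_sdiff_of_subset hSA]
    omega
  let e : Fin (A \ S).card ≃ {x // x ∈ A \ S} := (A \ S).equivFin.symm
  let X i := insert (e i : Fin n) S
  have hX : ∀ i, X i ⊆ A ∧ (X i).card = r + 1 := fun i =>
    have hi := Finset.mem_sdiff.mp (e i).2
    ⟨Finset.insert_subset hi.1 hSA, by rw [Finset.card_insert_of_notMem hi.2, hS]⟩
  choose B hB using fun i => hH.exists_least_hyperedge hA h₂ (hX i).1 (by rw [(hX i).2]; omega)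
  have hSB : ∀ i, S ⊆ B i := fun i => (Finset.subset_insert _ _).trans (hB i).2.1
  have hA_eq : Finset.univ.sup B = A := by
    refine le_antisymm (Finset.sup_le fun i _ => (hB i).2.2.2 A hA (hX i).1 h₂) fun a ha => ?_
    by_cases haS : a ∈ S
    · exact Finset.mem_sup.mpr ⟨e.symm ⟨a₀, ha₀⟩, Finset.mem_univ _, hSB _ haS⟩
    · refine Finset.mem_sup.mpr ⟨e.symm ⟨a, Finset.mem_sdiff.mpr ⟨ha, haS⟩⟩, Finset.mem_univ _, ?_⟩
      exact (hB _).2.1 (by simp [X])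
  have : Nonempty (Fin (A \ S).card) := ⟨e.symm ⟨a₀, ha₀⟩⟩
  refine ⟨_, X, B, hX, hB, ?_⟩
  simpa only [hA_eq] using sup_mem_clr hS.ge hSB
end

section
/- For every H ∈ K_r(n) there exists a subfamily H' ⊆ H with at most O(n^{r+1}) hyperedges (specifically, |H'| ≤ the number of (r+1)-subsets of [n]) such that cl_r(H') = H. -/
/-!
For every `(r+1)`-set `X` pick a member `m X` of `H` of minimum size containing `X`, and let
`H'` be the family of these sets. An uncrossing argument shows that `m X ⊆ A` whenever
`X ⊆ A ∈ H` and `2|A| ≤ n + 1`: otherwise rules (k1), (k2) applied to the complements of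
`m X` and `A` put the strictly smaller set `m X ∩ A ⊇ X` into `H`. Such an `A` is then the union
of an `r`-subset `R` with the sets `m (insert a R)`, `a ∈ A`, which pairwise meet in `R`, so
(k2) builds `A` inside `cl_r(H')`; the remaining members of `H` are complements of these.
-/

variable {r n : ℕ}

section Closure

variable {H E : Family n}

theorem subset_clr : H ⊆ clr r n H :=
  fun _ hA => Set.mem_sInter.mpr fun _ hE => hE.2 hA

theorem clr_subset_of_memK (hE : MemK r n E) (hHE : H ⊆ E) : clr r n H ⊆ E :=
  Set.sInter_subset_of_mem ⟨hE, hHE⟩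

theorem memK_clr : MemK r n (clr r n H) :=
  ⟨fun X hX => Set.mem_sInter.mpr fun _ hE => hE.1.1 X hX,
   fun A hA => Set.mem_sInter.mpr fun E hE => hE.1.2.1 A (Set.mem_sInter.mp hA E hE),
   fun A hA B hB hAB => Set.mem_sInter.mpr fun E hE =>
     hE.1.2.2 A (Set.mem_sInter.mp hA E hE) B (Set.mem_sInter.mp hB E hE) hAB⟩

end Closure

namespace MemK

variable {E : Family n}

theorem univ_mem (hE : MemK r n E) : Finset.univ ∈ E := by
  simpa using hE.2.1 ∅ (hE.1 ∅ (by simp))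

theorem compl_mem_iff (hE : MemK r n E) {A : Finset (Fin n)} : Aᶜ ∈ E ↔ A ∈ E :=
  ⟨fun h => compl_compl A ▸ hE.2.1 _ h, hE.2.1 A⟩

theorem inter_mem_s11 (hE : MemK r n E) {A B : Finset (Fin n)} (hA : A ∈ E) (hB : B ∈ E)
    (hAB : r ≤ (Aᶜ ∩ Bᶜ).card) : A ∩ B ∈ E := by
  rw [← hE.compl_mem_iff, Finset.compl_inter]
  exact hE.2.2 _ (hE.2.1 A hA) _ (hE.2.1 B hB) hAB

theorem mem_of_forall_exists_insert_subset (hE : MemK r n E) {R A : Finset (Fin n)}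
    (hR : R.card = r) (hRA : R ⊆ A)
    (hcover : ∀ a ∈ A \ R, ∃ C ∈ E, insert a R ⊆ C ∧ C ⊆ A) : A ∈ E := by
  suffices h : ∀ T : Finset (Fin n), T ⊆ A → ∃ U ∈ E, R ∪ T ⊆ U ∧ U ⊆ A by
    obtain ⟨U, hU, hTU, hUA⟩ := h A subset_rfl
    rwa [(Finset.union_subset_right hTU).antisymm hUA]
  intro T
  induction T using Finset.induction_on with
  | empty => exact fun _ => ⟨R, hE.1 R hR.le, by simp, hRA⟩
  | insert a T _ ih =>
    intro haTA
    obtain ⟨U, hU, hTU, hUA⟩ := ih (Finset.insert_subset_iff.mp haTA).2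
    have haA : a ∈ A := haTA (Finset.mem_insert_self a T)
    by_cases haR : a ∈ R
    · refine ⟨U, hU, ?_, hUA⟩
      rw [Finset.union_insert, Finset.insert_eq_of_mem (Finset.mem_union_left T haR)]
      exact hTU
    obtain ⟨C, hC, haRC, hCA⟩ := hcover a (Finset.mem_sdiff.mpr ⟨haA, haR⟩)
    have hRUC : R ⊆ U ∩ C :=
      Finset.subset_inter (Finset.union_subset_left hTU) ((Finset.subset_insert a R).trans haRC)
    refine ⟨U ∪ C, hE.2.2 U hU C hC (hR ▸ Finset.card_le_card hRUC), ?_,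
      Finset.union_subset hUA hCA⟩
    rw [Finset.union_insert, Finset.insert_subset_iff]
    exact ⟨Finset.mem_union_right U (haRC (Finset.mem_insert_self a R)),
      hTU.trans Finset.subset_union_left⟩

end MemK

def IsMinCardSuperset (H : Family n) (X A : Finset (Fin n)) : Prop :=
  A ∈ H ∧ X ⊆ A ∧ ∀ B ∈ H, X ⊆ B → A.card ≤ B.card

theorem exists_isMinCardSuperset {H : Family n} (hH : Finset.univ ∈ H) (X : Finset (Fin n)) :
    ∃ A, IsMinCardSuperset H X A := by
  obtain ⟨A, ⟨hA, hXA⟩, hmin⟩ := Set.exists_min_image {A | A ∈ H ∧ X ⊆ A} Finset.card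
    (Set.toFinite _) ⟨Finset.univ, hH, Finset.subset_univ X⟩
  exact ⟨A, hA, hXA, fun B hB hXB => hmin B ⟨hB, hXB⟩⟩

theorem IsMinCardSuperset.subset_of_two_mul_card_le {H : Family n} (hH : MemK r n H)
    {X A B : Finset (Fin n)} (hA : IsMinCardSuperset H X A) (hX : r + 1 ≤ X.card)
    (hB : B ∈ H) (hXB : X ⊆ B) (hBn : 2 * B.card ≤ n + 1) : A ⊆ B := by
  obtain ⟨hAH, hXA, hmin⟩ := hA
  have hXAB : X ⊆ A ∩ B := Finset.subset_inter hXA hXB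
  have hAB : A.card ≤ B.card := hmin B hB hXB
  have hcompl : r ≤ (Aᶜ ∩ Bᶜ).card := by
    have := Finset.card_union_add_card_inter A B
    have := Finset.card_le_card hXAB
    have := (A ∪ B).card_le_univ.trans_eq (Fintype.card_fin n)
    rw [← Finset.compl_union, Finset.card_compl, Fintype.card_fin]
    omega
  have hAB_H : A ∩ B ∈ H := hH.inter_mem_s11 hAH hB hcompl
  have hcard : A.card ≤ (A ∩ B).card := hmin _ hAB_H hXAB
  rw [← Finset.eq_of_subset_of_card_le Finset.inter_subset_left hcard]
  exact Finset.inter_subset_right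

theorem ncard_setOf_card_eq {α : Type*} [Fintype α] (k : ℕ) :
    {X : Finset α | X.card = k}.ncard = (Fintype.card α).choose k := by
  have : {X : Finset α | X.card = k} = ((Finset.univ : Finset α).powersetCard k : Set (Finset α)) := by
    ext X
    simp [Finset.mem_powersetCard]
  rw [this, Set.ncard_coe_finset, Finset.card_powersetCard, Finset.card_univ]

theorem mem_clr_image_of_two_mul_card_le {H : Family n} (hH : MemK r n H)
    {m : Finset (Fin n) → Finset (Fin n)} (hm : ∀ X, IsMinCardSuperset H X (m X))
    {A : Finset (Fin n)} (hA : A ∈ H) (hAn : 2 * A.card ≤ n + 1) :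
    A ∈ clr r n (m '' {X | X.card = r + 1}) := by
  by_cases hAr : A.card ≤ r
  · exact memK_clr.1 A hAr
  obtain ⟨R, hRA, hR⟩ := Finset.exists_subset_card_eq (show r ≤ A.card by omega)
  refine memK_clr.mem_of_forall_exists_insert_subset hR hRA fun a ha => ?_
  obtain ⟨haA, haR⟩ := Finset.mem_sdiff.mp ha
  have haR_card : (insert a R).card = r + 1 := by rw [Finset.card_insert_of_notMem haR, hR]
  exact ⟨m (insert a R), subset_clr ⟨insert a R, haR_card, rfl⟩, (hm _).2.1,
    (hm _).subset_of_two_mul_card_le hH haR_card.ge hA (Finset.insert_subset haA hRA) hAn⟩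

theorem polynomial_representation (r n : ℕ) (H : Family n) (hH : MemK r n H) :
    ∃ H' : Family n, H' ⊆ H ∧ H'.ncard ≤ Nat.choose n (r + 1) ∧ clr r n H' = H := by
  choose m hm using exists_isMinCardSuperset hH.univ_mem
  have hsub : m '' {X | X.card = r + 1} ⊆ H := Set.image_subset_iff.mpr fun X _ => (hm X).1
  refine ⟨_, hsub, (Set.ncard_image_le (Set.toFinite _)).trans_eq
      (by rw [ncard_setOf_card_eq, Fintype.card_fin]),
    (clr_subset_of_memK hH hsub).antisymm fun A hA => ?_⟩
  by_cases hAn : 2 * A.card ≤ n + 1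
  · exact mem_clr_image_of_two_mul_card_le hH hm hA hAn
  · have hAc : 2 * Aᶜ.card ≤ n + 1 := by
      have := A.card_le_univ.trans_eq (Fintype.card_fin n)
      rw [Finset.card_compl, Fintype.card_fin]
      omega
    exact memK_clr.compl_mem_iff.mp
      (mem_clr_image_of_two_mul_card_le hH hm (hH.2.1 A hA) hAc)
end

section
/- For A, B ⊆ V = [n], A and B are r-orthogonal (i.e. cl_r({A,B}) = cl⊥_r({A,B})) if and only if both of the following hold: (|A∩B| < r ∨ A ⊆ B ∨ B ⊆ A ∨ |V∖(A∪B)| < r ∨ (|A∩B| = |V∖(A∪B)| = r)) and (|A∖B| < r ∨ A∩B = ∅ ∨ V∖(A∪B) = ∅ ∨ |B∖A| < r ∨ (|A∖B| = |B∖A| = r)). -/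
/-! ### Auxiliary development -/

/-- Explicit description of membership in `clbot r n {A, B}`. -/
def InCl (r : ℕ) {n : ℕ} (A B X : Finset (Fin n)) : Prop :=
  X.card ≤ r ∨ Xᶜ.card ≤ r ∨ X = A ∨ X = Aᶜ ∨ X = B ∨ X = Bᶜ

/-- The first condition in the orthogonality criterion. -/
def Cond (r : ℕ) {n : ℕ} (A B : Finset (Fin n)) : Prop :=
  (A ∩ B).card < r ∨ A ⊆ B ∨ B ⊆ A ∨ ((A ∪ B)ᶜ).card < r ∨
    ((A ∩ B).card = r ∧ ((A ∪ B)ᶜ).card = r)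

lemma compl_subset_compl_iff {n : ℕ} (A B : Finset (Fin n)) : Aᶜ ⊆ Bᶜ ↔ B ⊆ A := by
  constructor
  · intro h x hx; by_contra hc
    exact (Finset.mem_compl.mp (h (Finset.mem_compl.mpr hc))) hx
  · intro h x hx; exact Finset.mem_compl.mpr fun hxB => (Finset.mem_compl.mp hx) (h hxB)

lemma subset_compl_iff {n : ℕ} (A B : Finset (Fin n)) : A ⊆ Bᶜ ↔ A ∩ B = ∅ := by
  rw [← Finset.disjoint_iff_inter_eq_empty, ← le_compl_iff_disjoint_right]

lemma subset_self_compl {n : ℕ} {A : Finset (Fin n)} (h : A ⊆ Aᶜ) : A = ∅ := by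
  rw [subset_compl_iff, Finset.inter_self] at h; exact h

lemma compl_subset_self {n : ℕ} {A : Finset (Fin n)} (h : Aᶜ ⊆ A) : A = Finset.univ := by
  have h2 : Aᶜ ⊆ Aᶜᶜ := by rwa [compl_compl]
  have := subset_self_compl h2
  rw [← compl_compl A, this, Finset.compl_empty]

lemma cond_symm {r n : ℕ} {A B : Finset (Fin n)} (h : Cond r A B) : Cond r B A := by
  unfold Cond at *; rw [Finset.inter_comm, Finset.union_comm] at h; tauto

lemma cond_compl {r n : ℕ} {A B : Finset (Fin n)} (h : Cond r A B) : Cond r Aᶜ Bᶜ := by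
  unfold Cond at *
  rw [← Finset.compl_union, ← Finset.compl_inter, compl_compl,
    compl_subset_compl_iff, compl_subset_compl_iff] at *
  tauto

lemma inCl_swap {r n : ℕ} {A B X : Finset (Fin n)} : InCl r A B X ↔ InCl r B A X := by
  unfold InCl; tauto

lemma inCl_compl_right {r n : ℕ} {A B X : Finset (Fin n)} :
    InCl r A B X ↔ InCl r A Bᶜ X := by
  unfold InCl; rw [compl_compl]; tauto

lemma inCl_compl_left {r n : ℕ} {A B X : Finset (Fin n)} :
    InCl r A B X ↔ InCl r Aᶜ B X := by
  unfold InCl; rw [compl_compl]; tauto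

/-- From rule (k2) restricted to the explicit family, deduce the first condition. -/
lemma cond_of_k2 {r n : ℕ} {A B : Finset (Fin n)}
    (h : ∀ X Y : Finset (Fin n), InCl r A B X → InCl r A B Y →
      r ≤ (X ∩ Y).card → InCl r A B (X ∪ Y)) :
    Cond r A B := by
  by_contra hc
  unfold Cond at hc; push_neg at hc
  obtain ⟨h1, h2, h3, h4, h5⟩ := hc
  -- Step 1: `((A ∪ B)ᶜ).card = r`
  have hU : InCl r A B (A ∪ B) := h A B (Or.inr (Or.inr (Or.inl rfl)))
    (Or.inr (Or.inr (Or.inr (Or.inr (Or.inl rfl))))) h1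
  have hcU : ((A ∪ B)ᶜ).card = r := by
    rcases hU with hs | hs | hs | hs | hs | hs
    · have heq : A ∩ B = A ∪ B :=
        Finset.eq_of_subset_of_card_le Finset.inter_subset_union (le_trans hs h1)
      refine absurd ?_ h2
      intro x hx
      have hx2 : x ∈ A ∩ B := by rw [heq]; exact Finset.mem_union_left B hx
      exact (Finset.mem_inter.mp hx2).2
    · exact le_antisymm hs h4
    · exact absurd (by rw [← hs]; exact Finset.subset_union_right : B ⊆ A) h3
    · have hAe : A = ∅ := subset_self_compl
        (by rw [← hs]; exact Finset.subset_union_left)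
      exact absurd (by rw [hAe]; exact Finset.empty_subset B : A ⊆ B) h2
    · exact absurd (by rw [← hs]; exact Finset.subset_union_left : A ⊆ B) h2
    · have hBe : B = ∅ := subset_self_compl
        (by rw [← hs]; exact Finset.subset_union_right)
      exact absurd (by rw [hBe]; exact Finset.empty_subset A : B ⊆ A) h3
  -- Step 2: apply (k2) to `Aᶜ, Bᶜ`
  have hI : InCl r A B (Aᶜ ∪ Bᶜ) := by
    apply h Aᶜ Bᶜ (Or.inr (Or.inr (Or.inr (Or.inl rfl))))
      (Or.inr (Or.inr (Or.inr (Or.inr (Or.inr rfl)))))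
    rw [← Finset.compl_union, hcU]
  rw [← Finset.compl_inter] at hI
  rcases hI with hs | hs | hs | hs | hs | hs
  · -- `((A ∩ B)ᶜ).card ≤ r`
    have hsub : (A ∪ B)ᶜ ⊆ (A ∩ B)ᶜ := (compl_subset_compl_iff _ _).mpr
      Finset.inter_subset_union
    have heq : (A ∪ B)ᶜ = (A ∩ B)ᶜ :=
      Finset.eq_of_subset_of_card_le hsub (hcU ▸ hs)
    have heq2 : A ∪ B = A ∩ B := compl_injective heq
    refine absurd ?_ h2
    intro x hx
    have hx2 : x ∈ A ∩ B := by rw [← heq2]; exact Finset.mem_union_left B hx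
    exact (Finset.mem_inter.mp hx2).2
  · rw [compl_compl] at hs
    exact h5 (le_antisymm hs h1) hcU
  · -- `(A ∩ B)ᶜ = A`, so `A ∩ B = Aᶜ ⊆ A`, hence `A = univ`
    have hAB : A ∩ B = Aᶜ := by rw [← compl_compl (A ∩ B), hs]
    have hA : A = Finset.univ := compl_subset_self
      (by rw [← hAB]; exact Finset.inter_subset_left)
    exact absurd (by rw [hA]; exact Finset.subset_univ B : B ⊆ A) h3
  · have heq : A ∩ B = A := compl_injective hs
    exact absurd (Finset.inter_eq_left.mp heq) h2
  · have hAB : A ∩ B = Bᶜ := by rw [← compl_compl (A ∩ B), hs]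
    have hB : B = Finset.univ := compl_subset_self
      (by rw [← hAB]; exact Finset.inter_subset_right)
    exact absurd (by rw [hB]; exact Finset.subset_univ A : A ⊆ B) h2
  · have heq : A ∩ B = B := compl_injective hs
    exact absurd (Finset.inter_eq_right.mp heq) h3

/-- From the first condition, the union of the generating pair is in the family. -/
lemma unionMem {r n : ℕ} {A B : Finset (Fin n)} (hAB : Cond r A B)
    (hcard : r ≤ (A ∩ B).card) : InCl r A B (A ∪ B) := by
  rcases hAB with h | h | h | h | h
  · omega
  · exact Or.inr (Or.inr (Or.inr (Or.inr (Or.inl (Finset.union_eq_right.mpr h)))))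
  · exact Or.inr (Or.inr (Or.inl (Finset.union_eq_left.mpr h)))
  · exact Or.inr (Or.inl (le_of_lt h))
  · exact Or.inr (Or.inl (le_of_eq h.2))

/-- The two conditions imply rule (k2) for the explicit family. -/
lemma k2_of_conds {r n : ℕ} {A B : Finset (Fin n)}
    (hAB : Cond r A B) (hABc : Cond r A Bᶜ) :
    ∀ X Y : Finset (Fin n), InCl r A B X → InCl r A B Y →
      r ≤ (X ∩ Y).card → InCl r A B (X ∪ Y) := by
  have hBA : Cond r B A := cond_symm hAB
  have hAcBc : Cond r Aᶜ Bᶜ := cond_compl hAB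
  have hAcB : Cond r Aᶜ B := by
    have := cond_compl hABc; rwa [compl_compl] at this
  have hBcA : Cond r Bᶜ A := cond_symm hABc
  have hBAc : Cond r B Aᶜ := cond_symm hAcB
  have hBcAc : Cond r Bᶜ Aᶜ := cond_symm hAcBc
  intro X Y hX hY hcard
  -- dispatch small / cosmall cases for X and Y
  rcases hX with hs | hs | hx | hx | hx | hx
  · have hXY : X ⊆ Y := by
      have heq : X ∩ Y = X := Finset.eq_of_subset_of_card_le Finset.inter_subset_left
        (le_trans hs hcard)
      rw [← heq]; exact Finset.inter_subset_right
    rw [Finset.union_eq_right.mpr hXY]; exact hY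
  · refine Or.inr (Or.inl (le_trans (Finset.card_le_card ?_) hs))
    exact (compl_subset_compl_iff _ _).mpr Finset.subset_union_left
  all_goals (
    rcases hY with hs | hs | hy | hy | hy | hy
    · -- Y small
      have hYX : Y ⊆ X := by
        have heq : X ∩ Y = Y := Finset.eq_of_subset_of_card_le Finset.inter_subset_right
          (le_trans hs hcard)
        rw [← heq]; exact Finset.inter_subset_left
      rw [Finset.union_eq_left.mpr hYX, hx]
      first
        | exact Or.inr (Or.inr (Or.inl rfl))
        | exact Or.inr (Or.inr (Or.inr (Or.inl rfl)))
        | exact Or.inr (Or.inr (Or.inr (Or.inr (Or.inl rfl))))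
        | exact Or.inr (Or.inr (Or.inr (Or.inr (Or.inr rfl))))
    · -- Y cosmall
      refine Or.inr (Or.inl (le_trans (Finset.card_le_card ?_) hs))
      exact (compl_subset_compl_iff _ _).mpr Finset.subset_union_right
    all_goals (rw [hx] at hcard ⊢; rw [hy] at hcard ⊢))
  -- now the 16 explicit cases
  all_goals first
    | (rw [Finset.union_self]
       first
        | exact Or.inr (Or.inr (Or.inl rfl))
        | exact Or.inr (Or.inr (Or.inr (Or.inl rfl)))
        | exact Or.inr (Or.inr (Or.inr (Or.inr (Or.inl rfl))))
        | exact Or.inr (Or.inr (Or.inr (Or.inr (Or.inr rfl)))))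
    | (rw [Finset.union_compl]
       exact Or.inr (Or.inl (by rw [Finset.compl_univ]; simp)))
    | (rw [Finset.union_comm, Finset.union_compl]
       exact Or.inr (Or.inl (by rw [Finset.compl_univ]; simp)))
    | exact unionMem hAB hcard
    | (rw [inCl_compl_right]; exact unionMem hABc hcard)
    | (rw [inCl_compl_left]; exact unionMem hAcB hcard)
    | (rw [inCl_compl_left, inCl_compl_right]; exact unionMem hAcBc hcard)
    | (rw [inCl_swap]; exact unionMem hBA hcard)
    | (rw [inCl_swap, inCl_compl_right]; exact unionMem hBAc hcard)
    | (rw [inCl_swap, inCl_compl_left]; exact unionMem hBcA hcard)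
    | (rw [inCl_swap, inCl_compl_left, inCl_compl_right]; exact unionMem hBcAc hcard)

/-- The explicit description of `clbot`. -/
lemma clbot_eq (r n : ℕ) (A B : Finset (Fin n)) :
    clbot r n {A, B} = {X | InCl r A B X} := by
  apply Set.Subset.antisymm
  · apply Set.sInter_subset_of_mem
    constructor
    · constructor
      · exact fun X hX => Or.inl hX
      · intro X hX
        rcases hX with hs | hs | rfl | rfl | rfl | rfl
        · exact Or.inr (Or.inl (by rwa [compl_compl]))
        · exact Or.inl hs
        · exact Or.inr (Or.inr (Or.inr (Or.inl rfl)))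
        · exact Or.inr (Or.inr (Or.inl (compl_compl A)))
        · exact Or.inr (Or.inr (Or.inr (Or.inr (Or.inr rfl))))
        · exact Or.inr (Or.inr (Or.inr (Or.inr (Or.inl (compl_compl B)))))
    · intro X hX
      rcases hX with rfl | rfl
      · exact Or.inr (Or.inr (Or.inl rfl))
      · exact Or.inr (Or.inr (Or.inr (Or.inr (Or.inl rfl))))
  · intro X hX E hE
    obtain ⟨⟨h0, h1⟩, hsub⟩ := hE
    rcases hX with hs | hs | rfl | rfl | rfl | rfl
    · exact h0 X hs
    · have hXc : Xᶜ ∈ E := h0 Xᶜ hs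
      have := h1 Xᶜ hXc; rwa [compl_compl] at this
    · exact hsub (Set.mem_insert _ _)
    · exact h1 A (hsub (Set.mem_insert _ _))
    · exact hsub (Set.mem_insert_of_mem _ rfl)
    · exact h1 B (hsub (Set.mem_insert_of_mem _ rfl))

lemma clr_memK (r n : ℕ) (H : Family n) : MemK r n (clr r n H) := by
  refine ⟨fun X hX E hE => hE.1.1 X hX, fun X hX E hE => hE.1.2.1 X (hX E hE),
    fun X hX Y hY hc E hE => hE.1.2.2 X (hX E hE) Y (hY E hE) hc⟩

lemma clbot_subset_clr (r n : ℕ) (H : Family n) : clbot r n H ⊆ clr r n H := by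
  apply Set.sInter_subset_sInter
  intro E hE
  exact ⟨⟨hE.1.1, hE.1.2.1⟩, hE.2⟩

lemma ortho_iff_memK (r n : ℕ) (A B : Finset (Fin n)) :
    Ortho r n A B ↔ MemK r n {X | InCl r A B X} := by
  constructor
  · intro h
    have := clr_memK r n {A, B}
    rwa [h, clbot_eq] at this
  · intro h
    apply Set.Subset.antisymm
    · rw [clbot_eq]
      apply Set.sInter_subset_of_mem
      refine ⟨h, ?_⟩
      intro X hX
      rcases hX with rfl | rfl
      · exact Or.inr (Or.inr (Or.inl rfl))
      · exact Or.inr (Or.inr (Or.inr (Or.inr (Or.inl rfl))))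
    · exact clbot_subset_clr r n _

lemma memK_explicit_iff (r n : ℕ) (A B : Finset (Fin n)) :
    MemK r n {X | InCl r A B X} ↔ (Cond r A B ∧ Cond r A Bᶜ) := by
  constructor
  · intro h
    refine ⟨cond_of_k2 (fun X Y hX hY hc => h.2.2 X hX Y hY hc), ?_⟩
    apply cond_of_k2
    intro X Y hX hY hc
    rw [← inCl_compl_right] at hX hY ⊢
    exact h.2.2 X hX Y hY hc
  · intro ⟨h1, h2⟩
    refine ⟨fun X hX => Or.inl hX, ?_,
      fun X hX Y hY hc => k2_of_conds h1 h2 X Y hX hY hc⟩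
    intro X hX
    rcases hX with hs | hs | rfl | rfl | rfl | rfl
    · exact Or.inr (Or.inl (by rwa [compl_compl]))
    · exact Or.inl hs
    · exact Or.inr (Or.inr (Or.inr (Or.inl rfl)))
    · exact Or.inr (Or.inr (Or.inl (compl_compl A)))
    · exact Or.inr (Or.inr (Or.inr (Or.inr (Or.inr rfl))))
    · exact Or.inr (Or.inr (Or.inr (Or.inr (Or.inl (compl_compl B)))))

lemma condBc_iff (r n : ℕ) (A B : Finset (Fin n)) :
    Cond r A Bᶜ ↔ ((A \ B).card < r ∨ A ∩ B = ∅ ∨ (A ∪ B)ᶜ = ∅ ∨ (B \ A).card < r ∨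
        ((A \ B).card = r ∧ (B \ A).card = r)) := by
  have e1 : A ∩ Bᶜ = A \ B := (Finset.sdiff_eq_inter_compl A B).symm
  have e2 : (A ∪ Bᶜ)ᶜ = B \ A := by
    rw [Finset.compl_union, compl_compl, Finset.sdiff_eq_inter_compl, Finset.inter_comm]
  have e3 : A ⊆ Bᶜ ↔ A ∩ B = ∅ := subset_compl_iff A B
  have e4 : Bᶜ ⊆ A ↔ (A ∪ B)ᶜ = ∅ := by
    rw [Finset.compl_union, Finset.inter_comm]
    have := subset_compl_iff Bᶜ Aᶜ
    rwa [compl_compl] at this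
  unfold Cond
  rw [e1, e2, e3, e4]

theorem ortho_iff (r n : ℕ) (A B : Finset (Fin n)) :
    Ortho r n A B ↔
      (((A ∩ B).card < r ∨ A ⊆ B ∨ B ⊆ A ∨ ((A ∪ B)ᶜ).card < r ∨
        ((A ∩ B).card = r ∧ ((A ∪ B)ᶜ).card = r)) ∧
       ((A \ B).card < r ∨ A ∩ B = ∅ ∨ (A ∪ B)ᶜ = ∅ ∨ (B \ A).card < r ∨
        ((A \ B).card = r ∧ (B \ A).card = r))) := by
  rw [ortho_iff_memK, memK_explicit_iff, condBc_iff]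
  rfl
end
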